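/- Let R be a commutative ring with a nonzero identity and M a unital R-module. The residuated graph RG(M) is the simple graph whose vertices are the submodules N of M for which [N:M] ≠ (0) and there exists a submodule K ≠ N with [K:M] ≠ (0) and [N:M]·[K:M] = (0), with distinct vertices P and Q adjacent if and only if [P:M]·[Q:M] = (0). If RG(M) is nonempty, then RG(M) is connected with diameter at most 3; that is, any two vertices of RG(M) are joined by a path in RG(M) of length at most 3. -/
import Mathlib


/-- The residuated ideal `[N : M] = {r ∈ R : r • m ∈ N for all m ∈ M}` of a
submodule `N` of a module `M` over a commutative ring `R`. -/
def residuatedIdeal {R M : Type*} [CommRing R] [AddCommGroup M]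
    [Module R M] (N : Submodule R M) : Ideal R where
  carrier := {r : R | ∀ m : M, r • m ∈ N}
  zero_mem' := by
    intro m
    rw [zero_smul]
    exact N.zero_mem
  add_mem' := by
    intro a b ha hb m
    rw [add_smul]
    exact N.add_mem (ha m) (hb m)
  smul_mem' := by
    intro c a ha m
    simp only [smul_eq_mul, Set.mem_setOf_eq] at *
    rw [mul_smul]
    exact N.smul_mem c (ha m)

lemma residuatedIdeal_mono {R M : Type*} [CommRing R] [AddCommGroup M]
    [Module R M] {A B : Submodule R M} (h : A ≤ B) :
    residuatedIdeal A ≤ residuatedIdeal B :=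
  fun _ hr m => h (hr m)

lemma residuatedIdeal_inf {R M : Type*} [CommRing R] [AddCommGroup M]
    [Module R M] (A B : Submodule R M) :
    residuatedIdeal (A ⊓ B) = residuatedIdeal A ⊓ residuatedIdeal B := by
  ext r
  constructor
  · intro h
    exact ⟨fun m => (h m).1, fun m => (h m).2⟩
  · rintro ⟨h1, h2⟩ m
    exact ⟨h1 m, h2 m⟩

/-- Theorem: let `R` be a commutative ring with a nonzero identity and `M` a
unital `R`-module.  The residuated graph `RG(M)` has as vertices the
submodules `N` with `[N:M] ≠ (0)` admitting some `K ≠ N` with `[K:M] ≠ (0)`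
and `[N:M]·[K:M] = (0)`, distinct vertices `P, Q` being adjacent iff
`[P:M]·[Q:M] = (0)`.  If `RG(M)` is nonempty, then any two of its vertices
are joined by a path of length at most `3`. -/
theorem residuatedGraph_diam_le_three
    {R M : Type*} [CommRing R] [Nontrivial R] [AddCommGroup M] [Module R M]
    (G : SimpleGraph (Submodule R M))
    (hG : ∀ N K : Submodule R M, G.Adj N K ↔ N ≠ K ∧ residuatedIdeal N ≠ ⊥ ∧
      residuatedIdeal K ≠ ⊥ ∧ residuatedIdeal N * residuatedIdeal K = ⊥)
    (hnonempty : ∃ N K : Submodule R M, G.Adj N K) :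
    ∀ N K : Submodule R M,
      (residuatedIdeal N ≠ ⊥ ∧ ∃ N' : Submodule R M, N' ≠ N ∧
        residuatedIdeal N' ≠ ⊥ ∧ residuatedIdeal N * residuatedIdeal N' = ⊥) →
      (residuatedIdeal K ≠ ⊥ ∧ ∃ K' : Submodule R M, K' ≠ K ∧
        residuatedIdeal K' ≠ ⊥ ∧ residuatedIdeal K * residuatedIdeal K' = ⊥) →
      ∃ p : G.Walk N K, p.IsPath ∧ p.length ≤ 3 := by
  intro N K ⟨hN, N', hN'N, hN', hNN'⟩ ⟨hK, K', hK'K, hK', hKK'⟩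
  by_cases hNK : N = K
  · subst hNK
    exact ⟨SimpleGraph.Walk.nil, SimpleGraph.Walk.IsPath.nil, by simp⟩
  by_cases hIJ : residuatedIdeal N * residuatedIdeal K = ⊥
  · refine ⟨SimpleGraph.Walk.cons ((hG N K).2 ⟨hNK, hN, hK, hIJ⟩) .nil, ?_, by simp⟩
    simp [SimpleGraph.Walk.cons_isPath_iff, hNK]
  -- key: multiplying into a bot product
  have key : ∀ {I I' J : Ideal R}, I * I' = ⊥ → J ≤ I' → I * J = ⊥ := by
    intro I I' J h hle
    exact le_bot_iff.mp (h ▸ Ideal.mul_mono_right hle)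
  by_cases hW : residuatedIdeal (N' ⊓ K') = ⊥
  · -- N - N' - K' - K, length 3
    have hprod : residuatedIdeal N' * residuatedIdeal K' = ⊥ := by
      refine le_bot_iff.mp ?_
      rw [← hW, residuatedIdeal_inf]
      exact Ideal.mul_le_inf
    have hN'K' : N' ≠ K' := by
      intro h; subst h
      exact hN' (by simpa using hW)
    have hN'K : N' ≠ K := by
      intro h; subst h
      exact hIJ hNN'
    have hNK' : N ≠ K' := by
      intro h; subst h
      exact hIJ (by rw [mul_comm]; exact hKK')
    refine ⟨SimpleGraph.Walk.cons ((hG N N').2 ⟨Ne.symm hN'N, hN, hN', hNN'⟩)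
      (SimpleGraph.Walk.cons ((hG N' K').2 ⟨hN'K', hN', hK', hprod⟩)
      (SimpleGraph.Walk.cons ((hG K' K).2 ⟨hK'K, hK', hK,
        by rw [mul_comm]; exact hKK'⟩) .nil)), ?_, by simp⟩
    simp [SimpleGraph.Walk.cons_isPath_iff, hNK, Ne.symm hN'N, hN'K', hN'K,
      hK'K, hNK']
  · -- N - (N' ⊓ K') - K, length 2
    set W := N' ⊓ K' with hWdef
    have hWN' : residuatedIdeal W ≤ residuatedIdeal N' := residuatedIdeal_mono inf_le_left
    have hWK' : residuatedIdeal W ≤ residuatedIdeal K' := residuatedIdeal_mono inf_le_right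
    have h1 : residuatedIdeal N * residuatedIdeal W = ⊥ := key hNN' hWN'
    have h2 : residuatedIdeal W * residuatedIdeal K = ⊥ := by
      rw [mul_comm]; exact key hKK' hWK'
    have hNW : N ≠ W := by
      intro h
      apply hIJ
      rw [mul_comm]
      refine key hKK' ?_
      rw [h]; exact hWK'
    have hWK : W ≠ K := by
      intro h
      apply hIJ
      refine key hNN' ?_
      rw [← h]; exact hWN'
    refine ⟨SimpleGraph.Walk.cons ((hG N W).2 ⟨hNW, hN, hW, h1⟩)
      (SimpleGraph.Walk.cons ((hG W K).2 ⟨hWK, hW, hK, h2⟩) .nil), ?_, by simp⟩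
    simp [SimpleGraph.Walk.cons_isPath_iff, hNK, hNW, hWK]
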